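/- For every a ≥ 0 and t = 2^a, the square ROD A_t coincides with the Adams–Lax–Phillips Octonion design O_t^{(O)}; equivalently, for every k < ρ(t), the k-th dispersion matrix of A_t equals the k-th dispersion matrix of O_t^{(O)}. Here A_t has dispersion matrices D_k^{(t)} given by D_k^{(t)}(i,j) = (−1)^{|i ∧ χ_t(k)|} if i ⊕ j = γ_t(k) and 0 otherwise, where (γ_t, χ_t) are the maps γ_t(8l+m) = t(1 − 2^{−l}) + 8^l·m and χ_t(8l+m) = 0 if l = 0, m = 0; t·2^{−l} if l ≠ 0, m = 0; 8^l·ψ̂_{2^d}(m) if l = c, m ≠ 0; t·2^{−l−1} + 8^l·ψ̂_8(m) if l ≠ c, m ≠ 0 (with a = 4c + d, 0 ≤ d ≤ 3). The family O_t^{(O)} is defined recursively: for t ∈ {1,2,4,8}, its k-th dispersion matrix is E_k^{(t)} with E_k^{(t)}(i,j) = (−1)^{|i ∧ ψ̂_t(k)|} if i ⊕ j = k and 0 otherwise (the design K_t); and for t = 16n (n = 2^b), ρ(16n) = ρ(n) + 8 and its dispersion matrices are, for k < 8, the block matrix [[I_n ⊗ E_k^{(8)}, 0],[0, I_n ⊗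 (E_k^{(8)})ᵀ]], and, for 8 ≤ k < ρ(n) + 8, the block matrix [[0, D′_{k−8} ⊗ I_8],[−(D′_{k−8})ᵀ ⊗ I_8, 0]], where D′_0,…,D′_{ρ(n)−1} are the dispersion matrices of O_n^{(O)} and ⊗ is the Kronecker product. -/

import Mathlib

/-- Hamming weight (popcount) of a natural number. -/
def hw (x : ℕ) : ℕ := (Nat.digits 2 x).sum

/-- Hurwitz–Radon number of `2^a`. -/
def rhoExp (a : ℕ) : ℕ := 8 * (a / 4) + 2 ^ (a % 4)

/-- The permutation `φ₁` of `{0,…,7}` sending `(0,1,2,3,4,5,6,7)` to `(0,1,2,3,4,7,5,6)`. -/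
def phi1 : ℕ → ℕ
  | 5 => 7
  | 6 => 5
  | 7 => 6
  | x => x

/-- `ψ̂_{2^e}(m) = (2^e − φ₁(m)) mod 2^e`. -/
def psiHat (e m : ℕ) : ℕ := (2 ^ e - phi1 m) % 2 ^ e

/-- Adams–Lax–Phillips (Octonion) map `γ_t(8l+m) = t(1 − 2^{−l}) + 8^l·m` for `t = 2^a`. -/
def gammaO (a x : ℕ) : ℕ :=
  (2 ^ a - 2 ^ a / 2 ^ (x / 8)) + 8 ^ (x / 8) * (x % 8)

/-- Adams–Lax–Phillips (Octonion) map `χ_t`: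
`χ_t(8l+m) = 0` if `l = 0, m = 0`; `t·2^{−l}` if `l ≠ 0, m = 0`;
`8^l·ψ̂_{2^d}(m)` if `l = c, m ≠ 0`; `t·2^{−l−1} + 8^l·ψ̂_8(m)` if `l ≠ c, m ≠ 0`
(where `t = 2^a`, `a = 4c + d`, `0 ≤ d ≤ 3`). -/
def chiO (a x : ℕ) : ℕ :=
  let l := x / 8
  let m := x % 8
  if m = 0 then (if l = 0 then 0 else 2 ^ a / 2 ^ l)
  else if l = a / 4 then 8 ^ l * psiHat (a % 4) m
  else 2 ^ a / 2 ^ (l + 1) + 8 ^ l * psiHat 3 m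

/-- `(i,j)` entry of the `k`-th dispersion matrix of the design `A_t` (`t = 2^a`):
`(−1)^{|i ∧ χ_t(k)|}` if `i ⊕ j = γ_t(k)`, and `0` otherwise. -/
noncomputable def Ddisp (a k i j : ℕ) : ℝ :=
  if i ^^^ j = gammaO a k then ((-1 : ℝ)) ^ (hw (i &&& chiO a k)) else 0

/-- `(i,j)` entry of the `k`-th dispersion matrix `E_k^{(2^e)}` of the base design
`K_{2^e}` (`e ∈ {0,1,2,3}`): `(−1)^{|i ∧ ψ̂_{2^e}(k)|}` if `i ⊕ j = k`, else `0`. -/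
noncomputable def Edisp (e k i j : ℕ) : ℝ :=
  if i ^^^ j = k then ((-1 : ℝ)) ^ (hw (i &&& psiHat e k)) else 0

/-- `(i,j)` entry of the `k`-th dispersion matrix of the Adams–Lax–Phillips Octonion
design `O_{2^a}^{(O)}`, defined recursively: for `a ≤ 3` it is the base design `K_{2^a}`;
for `t = 16n` (`n = 2^b`, `half := t/2 = 8n`) the `k`-th dispersion matrix is, for `k < 8`,
`[[I_n ⊗ E_k^{(8)}, 0], [0, I_n ⊗ (E_k^{(8)})ᵀ]]`, and for `8 ≤ k < ρ(n) + 8`,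
`[[0, D′_{k−8} ⊗ I_8], [−(D′_{k−8})ᵀ ⊗ I_8, 0]]`, where `D′` are the dispersion matrices
of `O_n^{(O)}`. -/
noncomputable def Odisp : ℕ → ℕ → ℕ → ℕ → ℝ
  | 0, k, i, j => Edisp 0 k i j
  | 1, k, i, j => Edisp 1 k i j
  | 2, k, i, j => Edisp 2 k i j
  | 3, k, i, j => Edisp 3 k i j
  | (b + 4), k, i, j =>
    let half := 2 ^ (b + 3)
    if k < 8 then
      if i < half ∧ j < half then
        (if i / 8 = j / 8 then Edisp 3 k (i % 8) (j % 8) else 0)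
      else if half ≤ i ∧ half ≤ j then
        (if (i - half) / 8 = (j - half) / 8 then
          Edisp 3 k ((j - half) % 8) ((i - half) % 8) else 0)
      else 0
    else
      if i < half ∧ half ≤ j then
        (if i % 8 = (j - half) % 8 then Odisp b (k - 8) (i / 8) ((j - half) / 8) else 0)
      else if half ≤ i ∧ j < half then
        (if (i - half) % 8 = j % 8 then -(Odisp b (k - 8) (j / 8) ((i - half) / 8)) else 0)
      else 0

/-!
Both designs are signed permutation matrices `xorDisp g c`, with `(i, j)` entry
`(-1)^|i ∧ c|` when `i ⊕ j = g`. Splitting the indices at bit `e` writes `xorDisp g c` as the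
Kronecker product of the matrices built from the high and the low bits of `g` and `c`. For
`t = 16n` the bit `t/2` of `γ_t(k)` and `χ_t(k)` selects the block, and the bits below it are
`γ_8(k), χ_8(k)` for `k < 8` and `8 γ_n(k'), 8 χ_n(k')` for `k = 8 + k'`; the Kronecker
factorisation then produces exactly the blocks `I_n ⊗ E_k^{(8)}` and `D'_{k'} ⊗ I_8` of the
recursive design.
Transposed blocks come from `D(j, i) = (-1)^|γ ∧ χ| D(i, j)`, and `|γ_t(k) ∧ χ_t(k)|` is odd for
`k ≠ 0`, again by induction along `t ↦ 16t`.
-/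

@[simp] lemma hw_zero : hw 0 = 0 := by simp [hw]

@[simp] lemma hw_one : hw 1 = 1 := by simp [hw]

lemma hw_eq_mod_two_add (n : ℕ) : hw n = n % 2 + hw (n / 2) := by
  rcases Nat.eq_zero_or_pos n with rfl | hn
  · simp
  · rw [hw, Nat.digits_def' (by norm_num) hn, List.sum_cons, ← hw]

lemma hw_eq_hw_div_add_hw_mod (e n : ℕ) : hw n = hw (n / 2 ^ e) + hw (n % 2 ^ e) := by
  induction e generalizing n with
  | zero => simp [Nat.mod_one]
  | succ e ih =>
    have hmod : n % 2 ^ (e + 1) = n % 2 + 2 * (n / 2 % 2 ^ e) := by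
      rw [pow_succ', Nat.mod_mul]
    rw [hw_eq_mod_two_add n, ih (n / 2), Nat.div_div_eq_div_mul, ← pow_succ',
      hw_eq_mod_two_add (n % 2 ^ (e + 1)), hmod]
    have h1 : (n % 2 + 2 * (n / 2 % 2 ^ e)) % 2 = n % 2 := by omega
    have h2 : (n % 2 + 2 * (n / 2 % 2 ^ e)) / 2 = n / 2 % 2 ^ e := by omega
    rw [h1, h2]
    ring

lemma neg_one_pow_hw_xor (x y : ℕ) :
    (-1 : ℝ) ^ hw (x ^^^ y) = (-1) ^ hw x * (-1) ^ hw y := by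
  induction x using Nat.strong_induction_on generalizing y with
  | _ x ih =>
    rcases Nat.eq_zero_or_pos x with rfl | hx
    · simp
    have hbit : (-1 : ℝ) ^ ((x ^^^ y) % 2) = (-1) ^ (x % 2) * (-1) ^ (y % 2) := by
      rw [Nat.xor_mod_two_eq, ← neg_one_pow_eq_pow_mod_two,
        ← neg_one_pow_eq_pow_mod_two (n := x), ← neg_one_pow_eq_pow_mod_two (n := y), pow_add]
    rw [hw_eq_mod_two_add (x ^^^ y), Nat.xor_div_two, pow_add, hbit, ih (x / 2) (by omega),
      hw_eq_mod_two_add x, hw_eq_mod_two_add y]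
    ring

lemma two_pow_mul_add_div {e r : ℕ} (q : ℕ) (hr : r < 2 ^ e) : (2 ^ e * q + r) / 2 ^ e = q := by
  rw [Nat.mul_add_div (Nat.two_pow_pos e), Nat.div_eq_of_lt hr, add_zero]

lemma two_pow_mul_add_mod {e r : ℕ} (q : ℕ) (hr : r < 2 ^ e) : (2 ^ e * q + r) % 2 ^ e = r := by
  rw [Nat.mul_add_mod, Nat.mod_eq_of_lt hr]

lemma exists_eq_two_pow_mul_add {e i : ℕ} (hi : i < 2 ^ (e + 1)) :
    ∃ s i₀, s < 2 ∧ i₀ < 2 ^ e ∧ i = 2 ^ e * s + i₀ :=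
  ⟨i / 2 ^ e, i % 2 ^ e, Nat.div_lt_of_lt_mul (by rwa [pow_succ] at hi),
    Nat.mod_lt _ (Nat.two_pow_pos e), (Nat.div_add_mod i _).symm⟩

lemma hw_two_pow_mul_add_and {e x y : ℕ} (p q : ℕ) (hx : x < 2 ^ e) (hy : y < 2 ^ e) :
    hw ((2 ^ e * p + x) &&& (2 ^ e * q + y)) = hw (p &&& q) + hw (x &&& y) := by
  rw [hw_eq_hw_div_add_hw_mod e, Nat.and_div_two_pow, Nat.and_mod_two_pow,
    two_pow_mul_add_div _ hx, two_pow_mul_add_div _ hy, two_pow_mul_add_mod _ hx,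
    two_pow_mul_add_mod _ hy]

lemma hw_eight_mul_and_eight_mul (x y : ℕ) : hw (8 * x &&& 8 * y) = hw (x &&& y) := by
  simpa using hw_two_pow_mul_add_and (e := 3) (x := 0) (y := 0) x y (by norm_num) (by norm_num)

noncomputable def xorDisp (g c i j : ℕ) : ℝ :=
  if i ^^^ j = g then (-1) ^ hw (i &&& c) else 0

lemma Ddisp_eq_xorDisp (a k i j : ℕ) : Ddisp a k i j = xorDisp (gammaO a k) (chiO a k) i j := rfl

lemma Edisp_eq_xorDisp (e k i j : ℕ) : Edisp e k i j = xorDisp k (psiHat e k) i j := rfl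

lemma xorDisp_eq_zero {g c i j : ℕ} (h : i ^^^ j ≠ g) : xorDisp g c i j = 0 := if_neg h

lemma xorDisp_of_xor_eq {g c i j : ℕ} (h : i ^^^ j = g) : xorDisp g c i j = (-1) ^ hw (i &&& c) :=
  if_pos h

lemma xorDisp_zero_zero (i j : ℕ) : xorDisp 0 0 i j = if i = j then 1 else 0 := by
  simp [xorDisp]

lemma xorDisp_swap (g c i j : ℕ) : xorDisp g c j i = (-1) ^ hw (g &&& c) * xorDisp g c i j := by
  unfold xorDisp
  rw [Nat.xor_comm j i]
  split_ifs with h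
  · obtain rfl : j = i ^^^ g := by rw [← h, ← Nat.xor_assoc, Nat.xor_self, Nat.zero_xor]
    rw [Nat.and_xor_distrib_right, neg_one_pow_hw_xor]
    ring
  · simp

lemma xorDisp_eq_div_mul_mod (e g c i j : ℕ) :
    xorDisp g c i j = xorDisp (g / 2 ^ e) (c / 2 ^ e) (i / 2 ^ e) (j / 2 ^ e) *
      xorDisp (g % 2 ^ e) (c % 2 ^ e) (i % 2 ^ e) (j % 2 ^ e) := by
  have hsplit : i ^^^ j = g ↔
      i / 2 ^ e ^^^ j / 2 ^ e = g / 2 ^ e ∧ i % 2 ^ e ^^^ j % 2 ^ e = g % 2 ^ e := by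
    rw [← Nat.xor_div_two_pow, ← Nat.xor_mod_two_pow]
    refine ⟨fun h => h ▸ ⟨rfl, rfl⟩, fun ⟨hd, hm⟩ => ?_⟩
    rw [← Nat.div_add_mod (i ^^^ j) (2 ^ e), hd, hm, Nat.div_add_mod]
  simp only [xorDisp, hsplit, hw_eq_hw_div_add_hw_mod e (i &&& c), Nat.and_div_two_pow,
    Nat.and_mod_two_pow, pow_add]
  split_ifs <;> simp_all

lemma xorDisp_two_pow_mul_add {e g₀ c₀ i₀ j₀ : ℕ} (g₁ c₁ i₁ j₁ : ℕ) (hg : g₀ < 2 ^ e)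
    (hc : c₀ < 2 ^ e) (hi : i₀ < 2 ^ e) (hj : j₀ < 2 ^ e) :
    xorDisp (2 ^ e * g₁ + g₀) (2 ^ e * c₁ + c₀) (2 ^ e * i₁ + i₀) (2 ^ e * j₁ + j₀) =
      xorDisp g₁ c₁ i₁ j₁ * xorDisp g₀ c₀ i₀ j₀ := by
  rw [xorDisp_eq_div_mul_mod e]
  simp only [two_pow_mul_add_div, two_pow_mul_add_mod, *]

lemma xorDisp_of_lt_eight {g c : ℕ} (i j : ℕ) (hg : g < 8) (hc : c < 8) :
    xorDisp g c i j = if i / 8 = j / 8 then xorDisp g c (i % 8) (j % 8) else 0 := by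
  have h := xorDisp_eq_div_mul_mod 3 g c i j
  norm_num [Nat.div_eq_of_lt, Nat.mod_eq_of_lt, hg, hc, xorDisp_zero_zero] at h
  rw [h]

lemma xorDisp_eight_mul (g c i j : ℕ) :
    xorDisp (8 * g) (8 * c) i j = if i % 8 = j % 8 then xorDisp g c (i / 8) (j / 8) else 0 := by
  have h := xorDisp_eq_div_mul_mod 3 (8 * g) (8 * c) i j
  norm_num [xorDisp_zero_zero] at h
  rw [h]

lemma rhoExp_add_four (b : ℕ) : rhoExp (b + 4) = rhoExp b + 8 := by
  simp only [rhoExp, Nat.add_div_right _ (by norm_num : 0 < 4), Nat.add_mod_right]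
  ring

lemma div_eight_le_of_lt_rhoExp {b k : ℕ} (hk : k < rhoExp b) : k / 8 ≤ b / 4 := by
  have : 2 ^ (b % 4) ≤ 8 := by
    have : b % 4 < 4 := Nat.mod_lt _ (by norm_num)
    interval_cases b % 4 <;> norm_num
  simp only [rhoExp] at hk
  omega

@[simp] lemma gammaO_zero (a : ℕ) : gammaO a 0 = 0 := by simp [gammaO]

@[simp] lemma chiO_zero (a : ℕ) : chiO a 0 = 0 := by simp [chiO]

lemma gammaO_chiO_of_lt_four :
    ∀ a < 4, ∀ k < rhoExp a, gammaO a k = k ∧ chiO a k = psiHat a k := by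
  decide

lemma gammaO_add_four_of_lt (b : ℕ) {k : ℕ} (hk : k < 8) : gammaO (b + 4) k = k := by
  simp [gammaO, Nat.div_eq_of_lt hk, Nat.mod_eq_of_lt hk]

lemma chiO_add_four_of_lt (b : ℕ) {k : ℕ} (hk : k < 8) :
    chiO (b + 4) k = 2 ^ (b + 3) * (if k = 0 then 0 else 1) + psiHat 3 k := by
  rcases eq_or_ne k 0 with rfl | hk0
  · simp [chiO, psiHat, phi1]
  · simp [chiO, Nat.div_eq_of_lt hk, Nat.mod_eq_of_lt hk, hk0, pow_succ]

lemma gammaO_add_four_eight_add {b k : ℕ} (hk : k < rhoExp b) :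
    gammaO (b + 4) (8 + k) = 2 ^ (b + 3) * 1 + 8 * gammaO b k := by
  have hl := div_eight_le_of_lt_rhoExp hk
  have h1 : (8 + k) / 8 = k / 8 + 1 := by omega
  have h2 : (8 + k) % 8 = k % 8 := by omega
  have e1 : (2:ℕ) ^ (b + 4) / 2 ^ (k / 8 + 1) = 8 * (2 ^ b / 2 ^ (k / 8)) := by
    rw [Nat.pow_div (by omega) (by norm_num), Nat.pow_div (by omega) (by norm_num),
      show b + 4 - (k / 8 + 1) = (b - k / 8) + 3 by omega, pow_add]
    ring
  have e2 : (8:ℕ) ^ (k / 8 + 1) * (k % 8) = 8 * (8 ^ (k / 8) * (k % 8)) := by ring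
  have e3 : 2 ^ b / 2 ^ (k / 8) ≤ 2 ^ b := Nat.div_le_self _ _
  have e4 : (2:ℕ) ^ (b + 4) = 16 * 2 ^ b := by ring
  have e5 : (2:ℕ) ^ (b + 3) = 8 * 2 ^ b := by ring
  simp only [gammaO, h1, h2, e1, e2]
  omega

lemma chiO_add_four_eight_add {b k : ℕ} (hk : k < rhoExp b) :
    chiO (b + 4) (8 + k) = 2 ^ (b + 3) * (if k = 0 then 1 else 0) + 8 * chiO b k := by
  have hl := div_eight_le_of_lt_rhoExp hk
  have h1 : (8 + k) / 8 = k / 8 + 1 := by omega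
  have h2 : (8 + k) % 8 = k % 8 := by omega
  have h3 : (b + 4) / 4 = b / 4 + 1 := by omega
  have h4 : (b + 4) % 4 = b % 4 := by omega
  simp only [chiO, h1, h2, h3, h4, Nat.add_right_cancel_iff, Nat.add_eq_zero_iff, one_ne_zero,
    and_false, if_false]
  rcases eq_or_ne k 0 with rfl | hk0
  · simp [pow_succ]
  by_cases hm : k % 8 = 0
  · have hl0 : k / 8 ≠ 0 := by omega
    rw [if_pos hm, if_pos hm, if_neg hl0, if_neg hk0, Nat.pow_div (by omega) (by norm_num),
      Nat.pow_div (by omega) (by norm_num), show b + 4 - (k / 8 + 1) = (b - k / 8) + 3 by omega,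
      pow_add]
    ring
  · rw [if_neg hm, if_neg hm, if_neg hk0]
    by_cases hc : k / 8 = b / 4
    · rw [if_pos hc, if_pos hc, pow_succ]
      ring
    · rw [if_neg hc, if_neg hc, Nat.pow_div (by omega) (by norm_num),
        Nat.pow_div (by omega) (by norm_num),
        show b + 4 - (k / 8 + 1 + 1) = (b - (k / 8 + 1)) + 3 by omega, pow_add, pow_succ]
      ring

lemma gammaO_lt_and_chiO_lt : ∀ a k, k < rhoExp a → gammaO a k < 2 ^ a ∧ chiO a k < 2 ^ a
  | 0, k, hk | 1, k, hk | 2, k, hk | 3, k, hk => by revert k; decide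
  | b + 4, k, hk => by
    have hH : (2:ℕ) ^ (b + 3) = 8 * 2 ^ b := by ring
    have hpos := Nat.two_pow_pos b
    have h2H : (2:ℕ) ^ (b + 4) = 2 * 2 ^ (b + 3) := by ring
    rw [rhoExp_add_four] at hk
    rcases Nat.lt_or_ge k 8 with hk8 | hk8
    · have hψ : psiHat 3 k < 8 := Nat.mod_lt _ (by norm_num)
      rw [gammaO_add_four_of_lt b hk8, chiO_add_four_of_lt b hk8]
      split_ifs <;> omega
    · obtain ⟨k, rfl⟩ := Nat.exists_eq_add_of_le hk8
      obtain ⟨hg, hc⟩ := gammaO_lt_and_chiO_lt b k (by omega)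
      rw [gammaO_add_four_eight_add (by omega), chiO_add_four_eight_add (by omega)]
      split_ifs <;> omega

lemma odd_hw_and_psiHat_three {k : ℕ} (hk : k < 8) (hk0 : k ≠ 0) :
    Odd (hw (k &&& psiHat 3 k)) := by
  revert k
  decide

lemma odd_hw_gammaO_and_chiO : ∀ a k, k < rhoExp a → k ≠ 0 → Odd (hw (gammaO a k &&& chiO a k))
  | 0, k, hk | 1, k, hk | 2, k, hk | 3, k, hk => by revert k; decide
  | b + 4, k, hk => by
    intro hk0
    rw [rhoExp_add_four] at hk
    rcases Nat.lt_or_ge k 8 with hk8 | hk8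
    · have h8 : (8:ℕ) ≤ 2 ^ (b + 3) :=
        le_trans (by norm_num) (Nat.pow_le_pow_right (by norm_num) (by omega : 3 ≤ b + 3))
      have hψ : psiHat 3 k < 8 := Nat.mod_lt _ (by norm_num)
      have hsplit := hw_two_pow_mul_add_and 0 (if k = 0 then 0 else 1)
        (by omega : k < 2 ^ (b + 3)) (by omega : psiHat 3 k < 2 ^ (b + 3))
      rw [mul_zero, zero_add, Nat.zero_and, hw_zero, zero_add] at hsplit
      rw [gammaO_add_four_of_lt b hk8, chiO_add_four_of_lt b hk8, hsplit]
      exact odd_hw_and_psiHat_three hk8 hk0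
    · obtain ⟨k, rfl⟩ := Nat.exists_eq_add_of_le hk8
      have hH : (2:ℕ) ^ (b + 3) = 8 * 2 ^ b := by ring
      obtain ⟨hg, hc⟩ := gammaO_lt_and_chiO_lt b k (by omega)
      rw [gammaO_add_four_eight_add (by omega), chiO_add_four_eight_add (by omega),
        hw_two_pow_mul_add_and _ _ (by omega) (by omega), hw_eight_mul_and_eight_mul]
      rcases eq_or_ne k 0 with rfl | hk0
      · simp
      · simpa [hk0] using odd_hw_gammaO_and_chiO b k (by omega) hk0

lemma neg_one_pow_hw_and_psiHat_three {k : ℕ} (hk : k < 8) :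
    (-1 : ℝ) ^ hw (k &&& psiHat 3 k) = if k = 0 then 1 else -1 := by
  split_ifs with hk0
  · simp [hk0]
  · exact (odd_hw_and_psiHat_three hk hk0).neg_one_pow

lemma neg_one_pow_hw_gammaO_and_chiO {a k : ℕ} (hk : k < rhoExp a) :
    (-1 : ℝ) ^ hw (gammaO a k &&& chiO a k) = if k = 0 then 1 else -1 := by
  split_ifs with hk0
  · simp [hk0]
  · exact (odd_hw_gammaO_and_chiO a k hk hk0).neg_one_pow

lemma Ddisp_add_four_eq_Odisp_of_lt_eight {b k i j : ℕ} (hk : k < 8) (hi : i < 2 ^ (b + 4))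
    (hj : j < 2 ^ (b + 4)) : Ddisp (b + 4) k i j = Odisp (b + 4) k i j := by
  have h8 : (8:ℕ) ≤ 2 ^ (b + 3) :=
    le_trans (by norm_num) (Nat.pow_le_pow_right (by norm_num) (by omega : 3 ≤ b + 3))
  have hψ : psiHat 3 k < 8 := Nat.mod_lt _ (by norm_num)
  obtain ⟨s, i, hs, hi₀, rfl⟩ := exists_eq_two_pow_mul_add hi
  obtain ⟨t, j, ht, hj₀, rfl⟩ := exists_eq_two_pow_mul_add hj
  have hsplit := xorDisp_two_pow_mul_add 0 (if k = 0 then 0 else 1) s t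
    (by omega : k < 2 ^ (b + 3)) (by omega : psiHat 3 k < 2 ^ (b + 3)) hi₀ hj₀
  rw [mul_zero, zero_add] at hsplit
  rw [Ddisp_eq_xorDisp, gammaO_add_four_of_lt b hk, chiO_add_four_of_lt b hk, hsplit,
    xorDisp_of_lt_eight i j hk hψ]
  interval_cases s <;> interval_cases t <;>
    simp [Odisp, hk, hi₀, hj₀, hi₀.not_ge, hj₀.not_ge, Edisp_eq_xorDisp,
      xorDisp_swap k (psiHat 3 k) (i % 8), xorDisp_eq_zero, xorDisp_of_xor_eq,
      neg_one_pow_hw_and_psiHat_three hk]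
  split_ifs <;> simp

lemma Ddisp_add_four_eight_add_eq_Odisp {b k i j : ℕ} (hk : k < rhoExp b)
    (ih : ∀ i j, i < 2 ^ b → j < 2 ^ b → Ddisp b k i j = Odisp b k i j)
    (hi : i < 2 ^ (b + 4)) (hj : j < 2 ^ (b + 4)) :
    Ddisp (b + 4) (8 + k) i j = Odisp (b + 4) (8 + k) i j := by
  have hH : (2:ℕ) ^ (b + 3) = 8 * 2 ^ b := by ring
  obtain ⟨hg, hc⟩ := gammaO_lt_and_chiO_lt b k hk
  obtain ⟨s, i, hs, hi₀, rfl⟩ := exists_eq_two_pow_mul_add hi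
  obtain ⟨t, j, ht, hj₀, rfl⟩ := exists_eq_two_pow_mul_add hj
  have hsplit := xorDisp_two_pow_mul_add 1 (if k = 0 then 1 else 0) s t
    (by omega : 8 * gammaO b k < 2 ^ (b + 3)) (by omega : 8 * chiO b k < 2 ^ (b + 3)) hi₀ hj₀
  have hij := ih (i / 8) (j / 8) (by omega) (by omega)
  have hji := ih (j / 8) (i / 8) (by omega) (by omega)
  rw [Ddisp_eq_xorDisp] at hij hji
  rw [Ddisp_eq_xorDisp, gammaO_add_four_eight_add hk, chiO_add_four_eight_add hk, hsplit,
    xorDisp_eight_mul]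
  interval_cases s <;> interval_cases t <;>
    simp [Odisp, hi₀, hj₀, hi₀.not_ge, hj₀.not_ge, ← hij, ← hji,
      xorDisp_swap (gammaO b k) (chiO b k) (i / 8), xorDisp_eq_zero, xorDisp_of_xor_eq,
      neg_one_pow_hw_gammaO_and_chiO hk]
  split_ifs <;> simp

/-- for every `a` and every `k < ρ(2^a)`, the `k`-th dispersion matrix of
the design `A_{2^a}` (built from the Octonion maps `(γ_t, χ_t)`) equals the `k`-th
dispersion matrix of the Adams–Lax–Phillips Octonion design `O_{2^a}^{(O)}`. -/
theorem stmt17 (a k : ℕ) (hk : k < rhoExp a) (i j : ℕ)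
    (hi : i < 2 ^ a) (hj : j < 2 ^ a) :
    Ddisp a k i j = Odisp a k i j := by
  induction a using Nat.strong_induction_on generalizing k i j with
  | _ a ih =>
  rcases Nat.lt_or_ge a 4 with ha | ha
  · obtain ⟨hg, hc⟩ := gammaO_chiO_of_lt_four a ha k hk
    interval_cases a <;> rw [Odisp, Ddisp_eq_xorDisp, Edisp_eq_xorDisp, hg, hc]
  · obtain ⟨b, rfl⟩ := Nat.exists_eq_add_of_le' ha
    rw [rhoExp_add_four] at hk
    rcases Nat.lt_or_ge k 8 with hk8 | hk8
    · exact Ddisp_add_four_eq_Odisp_of_lt_eight hk8 hi hj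
    · obtain ⟨k, rfl⟩ := Nat.exists_eq_add_of_le hk8
      exact Ddisp_add_four_eight_add_eq_Odisp (by omega) (ih b (by omega) k (by omega)) hi hj
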